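/- arXiv:1305.6198 — 2 statements merged into one kernel-verified Lean document; each statement's English description precedes it below -/
import Mathlib

section
/- Let A : (α, β) → ℝ^{N×N} have locally integrable entries with A(t) an ML-matrix for each t, and let x(t) be a Carathéodory solution of x' = A(t)x with all coordinates of x(t₀) strictly positive. Then for a.e. t, the derivative of ∑ᵢ ln xᵢ(t) is at least tr A(t) + 2 ∑_{j<k} √(a_{jk}(t) a_{kj}(t)). -/
/-!
A coordinate `xᵢ` solves `xᵢ' = aᵢᵢ xᵢ + (nonnegative terms)` as long as the other coordinates
stay nonnegative, so the integrating factor `exp (-∫ aᵢᵢ)` makes `xᵢ exp (-∫ aᵢᵢ)` nondecreasing;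
at the first time some coordinate vanishes this is absurd, so `x` stays positive after `t₀`.
By Lebesgue differentiation `x' = A x` a.e., hence `(∑ᵢ ln xᵢ)' = ∑ᵢ (A x)ᵢ / xᵢ`, which is the
trace plus the sums `a_jk x_k / x_j + a_kj x_j / x_k ≥ 2 √(a_jk a_kj)` over pairs `j < k` (AM-GM).
-/

open MeasureTheory Set Filter Topology

theorem LipschitzOnWith.comp_absolutelyContinuousOnInterval {X Y : Type*}
    [PseudoMetricSpace X] [PseudoMetricSpace Y] {g : X → Y} {K : NNReal} {s : Set X}
    {f : ℝ → X} {a b : ℝ} (hg : LipschitzOnWith K g s)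
    (hf : AbsolutelyContinuousOnInterval f a b) (hfs : MapsTo f (uIcc a b) s) :
    AbsolutelyContinuousOnInterval (g ∘ f) a b := by
  unfold AbsolutelyContinuousOnInterval at hf ⊢
  refine squeeze_zero' (.of_forall fun _ => Finset.sum_nonneg fun _ _ => dist_nonneg) ?_
    (by simpa using hf.const_mul (K : ℝ))
  rw [eventually_inf_principal]
  filter_upwards with E hE
  rw [Finset.mul_sum]
  gcongr with i hi
  exact hg.dist_le_mul _ (hfs (hE.1 i hi).1) _ (hfs (hE.1 i hi).2)

theorem LocallyLipschitz.comp_absolutelyContinuousOnInterval {F Y : Type*}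
    [SeminormedAddCommGroup F] [PseudoMetricSpace Y] {g : F → Y} {f : ℝ → F} {a b : ℝ}
    (hg : LocallyLipschitz g) (hf : AbsolutelyContinuousOnInterval f a b) :
    AbsolutelyContinuousOnInterval (g ∘ f) a b := by
  have hK : IsCompact (f '' uIcc a b) := isCompact_uIcc.image_of_continuousOn hf.continuousOn
  obtain ⟨K, hgK⟩ := hg.locallyLipschitzOn.exists_lipschitzOnWith_of_compact hK
  exact hgK.comp_absolutelyContinuousOnInterval hf (mapsTo_image f _)

theorem IntervalIntegrable.ae_hasDerivAt_integral_of_mem_Ioo {f : ℝ → ℝ} {a b : ℝ}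
    (hf : IntervalIntegrable f volume a b) :
    ∀ᵐ t, t ∈ Ioo a b → HasDerivAt (fun u => ∫ s in a..u, f s) (f t) t := by
  filter_upwards [hf.ae_hasDerivAt_integral] with t ht htab
  exact ht (Ioo_subset_Icc_self.trans Icc_subset_uIcc htab) a left_mem_uIcc

theorem mul_exp_integral_le_of_eq_add_integral {u v w : ℝ → ℝ} {a b : ℝ} (hab : a ≤ b)
    (hv : IntervalIntegrable v volume a b) (hw : IntervalIntegrable w volume a b)
    (hu : ∀ t ∈ Icc a b, u t = u a + ∫ s in a..t, v s)
    (hwuv : ∀ t ∈ Ioo a b, w t * u t ≤ v t) :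
    u a * Real.exp (∫ s in a..b, w s) ≤ u b := by
  -- Integrating factor: `u * exp (-∫ w)` is absolutely continuous with a.e. derivative
  -- `(v - w * u) * exp (-∫ w) ≥ 0`.
  set U : ℝ → ℝ := fun t => u a + ∫ s in a..t, v s
  set E : ℝ → ℝ := fun t => Real.exp (-∫ s in a..t, w s)
  have hU : AbsolutelyContinuousOnInterval U a b :=
    contDiffOn_const.absolutelyContinuousOnInterval.add
      (hv.absolutelyContinuousOnInterval_intervalIntegral left_mem_uIcc)
  have hE : AbsolutelyContinuousOnInterval E a b :=
    (Real.contDiff_exp.comp contDiff_neg).locallyLipschitz.comp_absolutelyContinuousOnInterval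
      (hw.absolutelyContinuousOnInterval_intervalIntegral left_mem_uIcc)
  have hderiv : ∀ᵐ t, t ∈ Ioo a b → HasDerivAt (U * E) ((v t - w t * u t) * E t) t := by
    filter_upwards [hv.ae_hasDerivAt_integral_of_mem_Ioo, hw.ae_hasDerivAt_integral_of_mem_Ioo]
      with t hUt hWt ht
    refine (((hUt ht).const_add (u a)).mul (hWt ht).neg.exp).congr_deriv ?_
    rw [← hu t (Ioo_subset_Icc_self ht)]
    simp only [E, Pi.neg_apply]
    ring
  have hmono : (U * E) a ≤ (U * E) b := by
    rw [← sub_nonneg, ← (hU.mul hE).integral_deriv_eq_sub]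
    refine intervalIntegral.integral_nonneg_of_ae_restrict hab ?_
    rw [← Measure.restrict_congr_set Ioo_ae_eq_Icc, EventuallyLE,
      ae_restrict_iff' measurableSet_Ioo]
    filter_upwards [hderiv] with t ht hmem
    rw [(ht hmem).deriv]
    exact mul_nonneg (sub_nonneg.2 (hwuv t hmem)) (Real.exp_pos _).le
  have hUa : U a = u a := by simp [U]
  have hUb : U b = u b := (hu b (right_mem_Icc.2 hab)).symm
  have hEa : E a = 1 := by simp [E]
  have hEb : E b = (Real.exp (∫ s in a..b, w s))⁻¹ := Real.exp_neg _
  rwa [Pi.mul_apply, Pi.mul_apply, hUa, hUb, hEa, hEb, mul_one, ← div_eq_mul_inv,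
    le_div_iff₀ (Real.exp_pos _)] at hmono

theorem exists_first_nonpos {ι : Type*} [Finite ι] {f : ι → ℝ → ℝ} {a b : ℝ}
    (hf : ∀ i, ContinuousOn (f i) (Icc a b)) (ha : ∀ i, 0 < f i a) (hb : ∃ i, f i b ≤ 0)
    (hab : a ≤ b) :
    ∃ τ ∈ Ioc a b, (∃ i, f i τ ≤ 0) ∧ ∀ t ∈ Icc a τ, ∀ i, 0 ≤ f i t := by
  set S := {t | ∃ i, t ∈ Icc a b ∧ f i t ≤ 0}
  have hS : IsClosed S := by
    simp only [S, ofPred_exists]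
    exact isClosed_iUnion_of_finite fun i =>
      (hf i).preimage_isClosed_of_isClosed isClosed_Icc isClosed_Iic
  have hSbdd : BddBelow S := ⟨a, fun t ⟨_, ht, _⟩ => ht.1⟩
  obtain ⟨i, hi⟩ := hb
  have hτ : sInf S ∈ S := hS.csInf_mem ⟨b, i, right_mem_Icc.2 hab, hi⟩ hSbdd
  obtain ⟨i₀, hτab, hτ₀⟩ := hτ
  have haτ : a < sInf S := hτab.1.lt_of_ne (by rintro h; exact (ha i₀).not_ge (h ▸ hτ₀))
  have hpos : ∀ t ∈ Ico a (sInf S), ∀ i, 0 < f i t := fun t ht i => by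
    by_contra! h
    exact (csInf_le hSbdd ⟨i, ⟨ht.1, ht.2.le.trans hτab.2⟩, h⟩).not_gt ht.2
  refine ⟨sInf S, ⟨haτ, hτab.2⟩, ⟨i₀, hτ₀⟩, fun t ht i => ?_⟩
  rw [← closure_Ico haτ.ne] at ht
  have hcont : ContinuousOn (f i) (closure (Ico a (sInf S))) := by
    rw [closure_Ico haτ.ne]
    exact (hf i).mono (Icc_subset_Icc_right hτab.2)
  exact le_on_closure (fun t ht => (hpos t ht i).le) continuousOn_const hcont ht

theorem MeasureTheory.LocallyIntegrableOn.ae_hasDerivAt_integral_of_Ioo {E : Type*}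
    [NormedAddCommGroup E] [NormedSpace ℝ E] [CompleteSpace E] {f : ℝ → E} {α β c : ℝ}
    (hf : LocallyIntegrableOn f (Ioo α β)) (hc : c ∈ Ioo α β) :
    ∀ᵐ t, t ∈ Ioo α β → HasDerivAt (fun u => ∫ s in c..u, f s) (f t) t := by
  have hrat : ∀ᵐ t, ∀ q : ℚ × ℚ, uIcc (q.1 : ℝ) q.2 ⊆ Ioo α β → t ∈ uIcc (q.1 : ℝ) q.2 →
      ∀ c ∈ uIcc (q.1 : ℝ) q.2, HasDerivAt (fun u => ∫ s in c..u, f s) (f t) t := by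
    refine ae_all_iff.2 fun q => ?_
    by_cases hq : uIcc (q.1 : ℝ) q.2 ⊆ Ioo α β
    · filter_upwards [(hf.integrableOn_compact_subset hq isCompact_uIcc).intervalIntegrable
        |>.ae_hasDerivAt_integral] with t ht _ using ht
    · exact .of_forall fun t h => absurd h hq
  filter_upwards [hrat] with t ht htU
  obtain ⟨p, hαp, hp⟩ := exists_rat_btwn (lt_min hc.1 htU.1)
  obtain ⟨q, hq, hqβ⟩ := exists_rat_btwn (max_lt hc.2 htU.2)
  have hpq : (p : ℝ) ≤ q := by
    linarith [min_le_left c t, le_max_left c t]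
  have hsub : uIcc (p : ℝ) q ⊆ Ioo α β := by
    rw [uIcc_of_le hpq]
    exact Icc_subset_Ioo hαp hqβ
  refine ht (p, q) hsub ?_ c ?_ <;> rw [uIcc_of_le hpq] <;> constructor <;>
    linarith [min_le_left c t, min_le_right c t, le_max_left c t, le_max_right c t]

theorem Finset.sum_sum_eq_sum_diag_add_sum_lt {ι M : Type*} [Fintype ι] [LinearOrder ι]
    [AddCommMonoid M] (f : ι → ι → M) :
    ∑ i, ∑ j, f i j =
      ∑ i, f i i + ∑ p ∈ univ.filter (fun p : ι × ι => p.1 < p.2), (f p.1 p.2 + f p.2 p.1) := by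
  have hdiag : ∑ p ∈ univ.filter (fun p : ι × ι => p.1 = p.2), f p.1 p.2 = ∑ i, f i i :=
    sum_nbij' Prod.fst (fun i => (i, i)) (by simp) (by simp) (by aesop) (by simp) (by aesop)
  have hgt : ∑ p ∈ univ.filter (fun p : ι × ι => p.2 < p.1), f p.1 p.2 =
      ∑ p ∈ univ.filter (fun p : ι × ι => p.1 < p.2), f p.2 p.1 :=
    sum_nbij' Prod.swap Prod.swap (by simp) (by simp) (by simp) (by simp) (by simp)
  rw [sum_add_distrib, ← hgt, ← hdiag, ← Fintype.sum_prod_type',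
    ← sum_filter_add_sum_filter_not univ (fun p : ι × ι => p.1 = p.2),
    ← sum_filter_add_sum_filter_not (univ.filter fun p : ι × ι => ¬p.1 = p.2)
      (fun p => p.1 < p.2)]
  congr 2 <;> refine sum_congr ?_ fun _ _ => rfl <;> ext p <;>
    simp only [mem_filter, mem_univ, true_and] <;> grind

theorem Matrix.trace_add_two_mul_sum_sqrt_le {ι : Type*} [Fintype ι] [LinearOrder ι]
    (a : Matrix ι ι ℝ) (ha : ∀ i j, i ≠ j → 0 ≤ a i j) (y : ι → ℝ) (hy : ∀ i, 0 < y i) :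
    a.trace + 2 * ∑ p ∈ Finset.univ.filter (fun p : ι × ι => p.1 < p.2),
        √(a p.1 p.2 * a p.2 p.1) ≤ ∑ i, (∑ j, a i j * y j) / y i := by
  have two_sqrt_mul_le {u v : ℝ} (hu : 0 ≤ u) (hv : 0 ≤ v) : 2 * √(u * v) ≤ u + v := by
    nlinarith [sq_nonneg (√u - √v), Real.sq_sqrt hu, Real.sq_sqrt hv, Real.sqrt_mul hu v]
  simp_rw [Finset.sum_div, Finset.sum_sum_eq_sum_diag_add_sum_lt, Finset.mul_sum]
  refine add_le_add (le_of_eq ?_) (Finset.sum_le_sum fun p hp => ?_)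
  · simp [Matrix.trace, mul_div_cancel_right₀ _ (hy _).ne']
  · have hne : p.1 ≠ p.2 := (Finset.mem_filter.1 hp).2.ne
    calc 2 * √(a p.1 p.2 * a p.2 p.1)
        = 2 * √((a p.1 p.2 * y p.2 / y p.1) * (a p.2 p.1 * y p.1 / y p.2)) := by
          congr 2
          field_simp [(hy p.1).ne', (hy p.2).ne']
      _ ≤ _ := two_sqrt_mul_le (div_nonneg (mul_nonneg (ha _ _ hne) (hy _).le) (hy _).le)
          (div_nonneg (mul_nonneg (ha _ _ hne.symm) (hy _).le) (hy _).le)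

section CooperativeSystem

variable {ι : Type*} [Fintype ι] {α β t₀ : ℝ} {A : ℝ → Matrix ι ι ℝ} {x : ℝ → ι → ℝ}

theorem locallyIntegrableOn_sum_mul
    (hint : ∀ i j, LocallyIntegrableOn (fun t => A t i j) (Ioo α β))
    (hcont : ∀ i, ContinuousOn (fun t => x t i) (Ioo α β)) (i : ι) :
    LocallyIntegrableOn (fun t => ∑ j, A t i j * x t j) (Ioo α β) :=
  (locallyIntegrableOn_iff isOpen_Ioo.isLocallyClosed).2 fun _K hK hKc =>
    integrable_finsetSum _ fun j _ =>
      ((hint i j).integrableOn_compact_subset hK hKc).mul_continuousOn ((hcont j).mono hK) hKc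

theorem ae_hasDerivAt_of_eq_add_integral (ht₀ : t₀ ∈ Ioo α β)
    (hint : ∀ i j, LocallyIntegrableOn (fun t => A t i j) (Ioo α β))
    (hcont : ∀ i, ContinuousOn (fun t => x t i) (Ioo α β))
    (hsol : ∀ t ∈ Ioo α β, ∀ i, x t i = x t₀ i + ∫ τ in t₀..t, ∑ j, A τ i j * x τ j) :
    ∀ᵐ t, t ∈ Ioo α β → ∀ i, HasDerivAt (fun s => x s i) (∑ j, A t i j * x t j) t := by
  have hprim := ae_all_iff.2 fun i =>
    (locallyIntegrableOn_sum_mul hint hcont i).ae_hasDerivAt_integral_of_Ioo ht₀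
  filter_upwards [hprim] with t ht htU i
  refine ((ht i htU).const_add (x t₀ i)).congr_of_eventuallyEq ?_
  filter_upwards [isOpen_Ioo.mem_nhds htU] with s hs using hsol s hs i

theorem pos_of_eq_add_integral_of_cooperative (ht₀ : t₀ ∈ Ioo α β)
    (hint : ∀ i j, LocallyIntegrableOn (fun t => A t i j) (Ioo α β))
    (hML : ∀ t ∈ Ioo α β, ∀ i j, i ≠ j → 0 ≤ A t i j)
    (hcont : ∀ i, ContinuousOn (fun t => x t i) (Ioo α β))
    (hsol : ∀ t ∈ Ioo α β, ∀ i, x t i = x t₀ i + ∫ τ in t₀..t, ∑ j, A τ i j * x τ j)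
    (hpos : ∀ i, 0 < x t₀ i) :
    ∀ t ∈ Ico t₀ β, ∀ i, 0 < x t i := by
  classical
  intro t₁ ht₁
  by_contra! hneg
  have hsub : Icc t₀ t₁ ⊆ Ioo α β := Icc_subset_Ioo ht₀.1 ht₁.2
  obtain ⟨τ, hτ, ⟨i, hxτ⟩, hnonneg⟩ := exists_first_nonpos (f := fun i t => x t i)
    (fun i => (hcont i).mono hsub) hpos hneg ht₁.1
  have hsubτ : uIcc t₀ τ ⊆ Ioo α β := by
    rw [uIcc_of_le hτ.1.le]
    exact (Icc_subset_Icc_right hτ.2).trans hsub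
  have hv := ((locallyIntegrableOn_sum_mul hint hcont i).integrableOn_compact_subset hsubτ
    isCompact_uIcc).intervalIntegrable
  have hw := ((hint i i).integrableOn_compact_subset hsubτ isCompact_uIcc).intervalIntegrable
  have hgrowth := mul_exp_integral_le_of_eq_add_integral (u := fun t => x t i) hτ.1.le hv hw
    (fun t ht => hsol t (hsubτ (Icc_subset_uIcc ht)) i) fun t ht => by
      rw [← Finset.add_sum_erase _ _ (Finset.mem_univ i)]
      exact le_add_of_nonneg_right <| Finset.sum_nonneg fun j hj =>
        mul_nonneg (hML t (hsubτ (Icc_subset_uIcc (Ioo_subset_Icc_self ht))) i j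
          (Finset.ne_of_mem_erase hj).symm) (hnonneg t (Ioo_subset_Icc_self ht) j)
  exact (mul_pos (hpos i) (Real.exp_pos _)).not_ge (hgrowth.trans hxτ)

end CooperativeSystem

/-- A.e. differential inequality for `∑ᵢ ln xᵢ` along cooperative linear ODE systems. -/
theorem stmt3 {N : ℕ} {α β t₀ : ℝ} (ht₀ : t₀ ∈ Set.Ioo α β)
    (A : ℝ → Matrix (Fin N) (Fin N) ℝ)
    (hint : ∀ i j, MeasureTheory.LocallyIntegrableOn (fun t => A t i j) (Set.Ioo α β))
    (hML : ∀ t ∈ Set.Ioo α β, ∀ i j, i ≠ j → 0 ≤ A t i j)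
    (x : ℝ → Fin N → ℝ)
    (hcont : ∀ i, ContinuousOn (fun t => x t i) (Set.Ioo α β))
    (hsol : ∀ t ∈ Set.Ioo α β, ∀ i,
      x t i = x t₀ i + ∫ τ in t₀..t, ∑ j, A τ i j * x τ j)
    (hpos : ∀ i, 0 < x t₀ i) :
    ∀ᵐ t ∂(MeasureTheory.volume.restrict (Set.Ioo t₀ β)),
      ∃ d : ℝ, HasDerivAt (fun s => ∑ i, Real.log (x s i)) d t ∧
        d ≥ Matrix.trace (A t) +
          2 * ∑ p ∈ Finset.univ.filter (fun p : Fin N × Fin N => p.1 < p.2),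
            Real.sqrt (A t p.1 p.2 * A t p.2 p.1) := by
  have hxpos := pos_of_eq_add_integral_of_cooperative ht₀ hint hML hcont hsol hpos
  rw [ae_restrict_iff' measurableSet_Ioo]
  filter_upwards [ae_hasDerivAt_of_eq_add_integral ht₀ hint hcont hsol] with t hder ht
  have htU : t ∈ Ioo α β := ⟨ht₀.1.trans ht.1, ht.2⟩
  have hxt := hxpos t ⟨ht.1.le, ht.2⟩
  exact ⟨_, HasDerivAt.fun_sum fun i _ => (hder htU i).log (hxt i).ne',
    (A t).trace_add_two_mul_sum_sqrt_le (hML t htU) (x t) hxt⟩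
end

section
/- Let A ∈ ℝ^{N×N} be an ML-matrix and x(t) = e^{tA}x₀ with x₀ having all coordinates strictly positive. Then ∏ᵢ xᵢ(t) ≥ exp(t·(tr A + 2 ∑_{j<k} √(a_{jk} a_{kj}))) · ∏ᵢ xᵢ(0) for all t ≥ 0. -/
open NormedSpace Finset
open scoped Nat

/-
Along the flow of a Metzler matrix `A`, the positive orthant is invariant: `A + c • 1` is entrywise
nonnegative for large `c`, so `exp (t • A) = exp (-c t) • exp (t • (A + c • 1))` has nonnegative
entries and a positive diagonal. On the orthant, `log ∏ᵢ xᵢ` has derivative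
`∑ᵢ (A x)ᵢ / xᵢ = tr A + ∑_{j < k} (a_{jk} r + a_{kj} / r)` with `r = x_k / x_j`, and AM-GM bounds
each summand below by `2 √(a_{jk} a_{kj})`. The mean value theorem integrates this bound.
-/

theorem Fintype.sum_prod_eq_sum_diag_add_sum_lt {ι M : Type*} [Fintype ι] [LinearOrder ι]
    [AddCommMonoid M] (F : ι × ι → M) :
    ∑ p, F p = ∑ i, F (i, i) + ∑ p ∈ univ.filter (fun p : ι × ι => p.1 < p.2), (F p + F p.swap) := by
  have hswap : ∑ p ∈ univ.filter (fun p : ι × ι => p.1 < p.2), F p.swap =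
      ∑ p ∈ univ.filter (fun p : ι × ι => p.2 < p.1), F p :=
    Finset.sum_equiv (Equiv.prodComm ι ι) (by simp) (fun _ _ => rfl)
  have hdiag : ∑ i, F (i, i) = ∑ p ∈ univ.filter (fun p : ι × ι => p.1 = p.2), F p :=
    Finset.sum_nbij' (fun i => (i, i)) Prod.fst (by simp) (by simp) (by simp)
      (by rintro ⟨i, j⟩ h; simp_all) (fun _ _ => rfl)
  rw [sum_add_distrib, hswap, hdiag, ← sum_union, ← sum_union]
  · congr 1
    ext p
    simp only [mem_univ, mem_union, mem_filter, true_and, true_iff]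
    exact (lt_trichotomy p.1 p.2).elim (Or.inr ∘ Or.inl) (Or.imp_right Or.inr)
  all_goals simp only [disjoint_left, mem_union, mem_filter]; grind

theorem Real.two_mul_sqrt_mul_le_mul_add_div {a b u : ℝ} (ha : 0 ≤ a) (hb : 0 ≤ b) (hu : 0 < u) :
    2 * √(a * b) ≤ a * u + b / u := by
  have hsplit : √(a * b) = √(a * u) * √(b / u) := by
    rw [← Real.sqrt_mul (by positivity)]
    congr 1
    field_simp
  have h := two_mul_le_add_sq (√(a * u)) (√(b / u))
  rwa [Real.sq_sqrt (by positivity), Real.sq_sqrt (by positivity), mul_assoc, ← hsplit] at h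

theorem exp_mul_mul_prod_le_prod_of_le_sum_div {ι : Type*} [Fintype ι] {f f' : ℝ → ι → ℝ}
    {C : ℝ} (hf : ∀ s, 0 ≤ s → HasDerivAt f (f' s) s) (hpos : ∀ s, 0 ≤ s → ∀ i, 0 < f s i)
    (hC : ∀ s, 0 ≤ s → C ≤ ∑ i, f' s i / f s i) {t : ℝ} (ht : 0 ≤ t) :
    Real.exp (C * t) * ∏ i, f 0 i ≤ ∏ i, f t i := by
  set g : ℝ → ℝ := fun u => ∑ i, Real.log (f u i)
  have hg : ∀ s, 0 ≤ s → HasDerivAt g (∑ i, f' s i / f s i) s := fun s hs =>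
    HasDerivAt.fun_sum fun i _ => (hasDerivAt_pi.1 (hf s hs) i).log (hpos s hs i).ne'
  have hgrowth : C * (t - 0) ≤ g t - g 0 := by
    exact (convex_Ici 0).mul_sub_le_image_sub_of_le_deriv
      (fun s hs => (hg s hs).continuousAt.continuousWithinAt)
      (fun s hs => (hg s (interior_subset hs)).differentiableAt.differentiableWithinAt)
      (fun s hs => (hg s (interior_subset hs)).deriv ▸ hC s (interior_subset hs))
      0 Set.self_mem_Ici t ht ht
  have hexp : ∀ s, 0 ≤ s → ∏ i, f s i = Real.exp (g s) := fun s hs => by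
    simp only [g, Real.exp_sum, Real.exp_log (hpos s hs _)]
  rw [hexp 0 le_rfl, hexp t ht, ← Real.exp_add]
  exact Real.exp_le_exp.2 (by linarith)

namespace Matrix

variable {m : Type*}

def IsMetzler (A : Matrix m m ℝ) : Prop :=
  ∀ i j, i ≠ j → 0 ≤ A i j

namespace IsMetzler

variable {A : Matrix m m ℝ}

theorem smul (hA : A.IsMetzler) {t : ℝ} (ht : 0 ≤ t) : (t • A).IsMetzler :=
  fun i j hij => mul_nonneg ht (hA i j hij)

theorem trace_add_two_mul_sum_sqrt_le [Fintype m] [LinearOrder m] (hA : A.IsMetzler) {y : m → ℝ}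
    (hy : ∀ i, 0 < y i) :
    trace A + 2 * ∑ p ∈ univ.filter (fun p : m × m => p.1 < p.2), √(A p.1 p.2 * A p.2 p.1) ≤
      ∑ i, (A *ᵥ y) i / y i := by
  have hpairs : ∑ i, (A *ᵥ y) i / y i = ∑ p : m × m, A p.1 p.2 * y p.2 / y p.1 := by
    simp only [mulVec, dotProduct, sum_div, ← univ_product_univ, sum_product]
  have htrace : trace A = ∑ i, A i i * y i / y i :=
    sum_congr rfl fun i _ => (mul_div_cancel_right₀ _ (hy i).ne').symm
  rw [hpairs, Fintype.sum_prod_eq_sum_diag_add_sum_lt, mul_sum, htrace]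
  refine add_le_add le_rfl (sum_le_sum fun p hp => ?_)
  have hlt : p.1 < p.2 := (mem_filter.1 hp).2
  refine (Real.two_mul_sqrt_mul_le_mul_add_div (hA _ _ hlt.ne) (hA _ _ hlt.ne')
    (div_pos (hy p.2) (hy p.1))).trans_eq ?_
  simp only [Prod.fst_swap, Prod.snd_swap, mul_div_assoc, div_div_eq_mul_div]

end IsMetzler

section Exp

variable [Fintype m] [DecidableEq m] {A : Matrix m m ℝ}

theorem hasSum_exp_apply (M : Matrix m m ℝ) (i j : m) :
    HasSum (fun n => (n ! : ℝ)⁻¹ * (M ^ n) i j) (exp M i j) := by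
  open scoped Norms.Operator in
  exact Pi.hasSum.1 (Pi.hasSum.1 (exp_series_hasSum_exp' (𝕂 := ℝ) M) i) j

section Nonneg

variable {M : Matrix m m ℝ} (hM : ∀ i j, 0 ≤ M i j)
include hM

theorem exp_apply_nonneg_of_nonneg (i j : m) : 0 ≤ exp M i j :=
  (hasSum_exp_apply M i j).nonneg fun n => mul_nonneg (by positivity) (pow_apply_nonneg hM n i j)

theorem one_le_exp_apply_self_of_nonneg (i : m) : 1 ≤ exp M i i := by
  simpa using le_hasSum (hasSum_exp_apply M i i) 0
    fun n _ => mul_nonneg (by positivity) (pow_apply_nonneg hM n i i)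

end Nonneg

theorem exp_add_smul_one (M : Matrix m m ℝ) (c : ℝ) :
    exp (M + c • 1) = Real.exp c • exp M := by
  rw [exp_add_of_commute _ _ ((Commute.one_right M).smul_right c), smul_one_eq_diagonal,
    exp_diagonal, Pi.exp_def, ← Real.exp_eq_exp_ℝ, ← smul_one_eq_diagonal, mul_smul_comm, mul_one]

theorem hasDerivAt_exp_smul_mulVec (A : Matrix m m ℝ) (v : m → ℝ) (t : ℝ) :
    HasDerivAt (fun s : ℝ => exp (s • A) *ᵥ v) (A *ᵥ (exp (t • A) *ᵥ v)) t := by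
  open scoped Norms.Operator in
  rw [mulVec_mulVec]
  exact (LinearMap.toContinuousLinearMap ((mulVecBilin ℝ ℝ).flip v)).hasFDerivAt.comp_hasDerivAt t
    (hasDerivAt_exp_smul_const' A t)

theorem IsMetzler.exists_nonneg_add_smul_one (hA : A.IsMetzler) :
    ∃ c : ℝ, ∀ i j, 0 ≤ (A + c • 1) i j := by
  refine ⟨∑ k, |A k k|, fun i j => ?_⟩
  rcases eq_or_ne i j with rfl | hij
  · have hdiag : |A i i| ≤ ∑ k, |A k k| :=
      single_le_sum (f := fun k => |A k k|) (fun _ _ => abs_nonneg _) (mem_univ i)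
    simp only [add_apply, smul_apply, one_apply_eq, smul_eq_mul, mul_one]
    linarith [neg_abs_le (A i i)]
  · simpa [one_apply_ne hij] using hA i j hij

theorem IsMetzler.exp_mulVec_pos (hA : A.IsMetzler) {v : m → ℝ} (hv : ∀ i, 0 < v i) (i : m) :
    0 < (exp A *ᵥ v) i := by
  obtain ⟨c, hc⟩ := hA.exists_nonneg_add_smul_one
  have hexp : exp A = Real.exp (-c) • exp (A + c • 1) := by
    rw [exp_add_smul_one, smul_smul, ← Real.exp_add, neg_add_cancel, Real.exp_zero, one_smul]
  have hdiag : v i ≤ (exp (A + c • 1) *ᵥ v) i :=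
    calc v i ≤ exp (A + c • 1) i i * v i :=
          le_mul_of_one_le_left (hv i).le (one_le_exp_apply_self_of_nonneg hc i)
      _ ≤ ∑ j, exp (A + c • 1) i j * v j :=
          single_le_sum (f := fun j => exp (A + c • 1) i j * v j)
            (fun j _ => mul_nonneg (exp_apply_nonneg_of_nonneg hc i j) (hv j).le) (mem_univ i)
  rw [hexp, smul_mulVec, Pi.smul_apply, smul_eq_mul]
  exact mul_pos (Real.exp_pos _) ((hv i).trans_le hdiag)

end Exp

end Matrix

open Matrix in
/-- Autonomous Kolotilina-type product estimate along `x(t) = e^{tA} x₀`. -/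
theorem stmt12 {N : ℕ} (A : Matrix (Fin N) (Fin N) ℝ)
    (hML : ∀ i j, i ≠ j → 0 ≤ A i j)
    (x₀ : Fin N → ℝ) (hx₀ : ∀ i, 0 < x₀ i)
    (x : ℝ → Fin N → ℝ)
    (hx : ∀ t, x t = (NormedSpace.exp (t • A)).mulVec x₀) :
    ∀ t : ℝ, 0 ≤ t →
      ∏ i, x t i ≥
        Real.exp (t * (Matrix.trace A +
          2 * ∑ p ∈ Finset.univ.filter (fun p : Fin N × Fin N => p.1 < p.2),
            Real.sqrt (A p.1 p.2 * A p.2 p.1))) * ∏ i, x 0 i := by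
  intro t ht
  have hA : A.IsMetzler := hML
  obtain rfl : x = fun t => exp (t • A) *ᵥ x₀ := funext hx
  have hpos : ∀ s : ℝ, 0 ≤ s → ∀ i, 0 < (exp (s • A) *ᵥ x₀) i := fun s hs =>
    (hA.smul hs).exp_mulVec_pos hx₀
  rw [ge_iff_le, mul_comm t]
  exact exp_mul_mul_prod_le_prod_of_le_sum_div
    (fun s _ => hasDerivAt_exp_smul_mulVec A x₀ s) hpos
    (fun s hs => hA.trace_add_two_mul_sum_sqrt_le (hpos s hs)) ht
end
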